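/- A poset P is minimal prime if and only if its comparability graph Comp(P) is a minimal prime graph. -/

import Mathlib

set_option autoImplicit false

/-- A set of vertices is autonomous if every vertex outside it is adjacent
either to all of its elements or to none of them. -/
def Autonomous {V : Type*} (G : SimpleGraph V) (A : Set V) : Prop :=
  ∀ v ∉ A, (∀ a ∈ A, G.Adj v a) ∨ (∀ a ∈ A, ¬ G.Adj v a)

/-- A graph is prime if it has more than three vertices and its only
autonomous sets are the trivial ones. -/
def PrimeGraph {V : Type*} (G : SimpleGraph V) : Prop :=
  3 < Cardinal.mk V ∧
    ∀ A : Set V, Autonomous G A → A = ∅ ∨ (∃ x, A = {x}) ∨ A = Set.univ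

/-- A graph is minimal prime if it is prime and every prime induced subgraph
of the same cardinality embeds a copy of it. -/
def MinimalPrimeGraph {V : Type*} (G : SimpleGraph V) : Prop :=
  PrimeGraph G ∧ ∀ W : Set V, Cardinal.mk W = Cardinal.mk V →
    PrimeGraph (G.induce W) → Nonempty (G ↪g G.induce W)

/-- A subset `A` of a poset is autonomous if every element outside `A`
compares in the same way to all elements of `A`. -/
def PosetAutonomous {α : Type*} (P : PartialOrder α) (A : Set α) : Prop :=
  ∀ v ∉ A, ∀ a ∈ A, ∀ a' ∈ A, (P.lt v a → P.lt v a') ∧ (P.lt a v → P.lt a' v)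

/-- A poset is prime if it has more than three elements and its only
autonomous sets are the trivial ones. -/
def PosetPrime {α : Type*} (P : PartialOrder α) : Prop :=
  3 < Cardinal.mk α ∧
    ∀ A : Set α, PosetAutonomous P A → A = ∅ ∨ (∃ x, A = {x}) ∨ A = Set.univ

/-- The comparability graph of a poset: distinct comparable elements are adjacent. -/
def compGraph {α : Type*} (P : PartialOrder α) : SimpleGraph α :=
  SimpleGraph.fromRel (fun x y => P.le x y)

/-- `P` embeds in `Q` if `P` is isomorphic to an induced subposet of `Q`. -/
def PosetEmbeds {α β : Type*} (P : PartialOrder α) (Q : PartialOrder β) : Prop :=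
  ∃ f : α → β, ∀ x y : α, P.le x y ↔ Q.le (f x) (f y)

/-- The induced subposet on a subset `W`. -/
def inducedPoset {α : Type*} (P : PartialOrder α) (W : Set α) : PartialOrder W where
  le x y := P.le x.1 y.1
  lt x y := P.le x.1 y.1 ∧ ¬ P.le y.1 x.1
  lt_iff_le_not_ge _ _ := Iff.rfl
  le_refl _ := P.le_refl _
  le_trans _ _ _ h1 h2 := P.le_trans _ _ _ h1 h2
  le_antisymm _ _ h1 h2 := Subtype.ext (P.le_antisymm _ _ h1 h2)

/-- A poset is minimal prime if it is prime and every prime induced subposet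
of the same cardinality embeds a copy of it. -/
def PosetMinimalPrime {α : Type*} (P : PartialOrder α) : Prop :=
  PosetPrime P ∧ ∀ W : Set α, Cardinal.mk W = Cardinal.mk α →
    PosetPrime (inducedPoset P W) → PosetEmbeds P (inducedPoset P W)

/-!
Poset-autonomous sets are autonomous in `Comp(P)`. Conversely, a nontrivial autonomous set `A`
of `Comp(P)` contains a nontrivial poset-autonomous set if it is not a chain (a component of `A`
in the complement graph); if it is a chain, any interval `[a, b]` with `a < b` in `A` is
poset-autonomous, and it is everything only if `a` is a least element, which a prime poset lacks.
So `P` is prime iff `Comp(P)` is.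

Order embeddings induce embeddings of comparability graphs. Conversely, in a prime graph the span
of every class of Gallai's forcing relation is autonomous, hence everything, which forces every
forcing-invariant predicate on edges to be constant. For "the graph embedding `f` preserves the
orientation of this edge" this says that an embedding `Comp(P) ↪ Comp(P|W)` preserves or
reverses the order; in the second case `x ↦ f (f x)` preserves it.
-/

open Set

lemma subsingleton_or_eq_univ_of_trichotomy {V : Type*} {A : Set V}
    (h : A = ∅ ∨ (∃ x, A = {x}) ∨ A = univ) : A.Subsingleton ∨ A = univ := by
  rcases h with rfl | ⟨x, rfl⟩ | h
  exacts [Or.inl subsingleton_empty, Or.inl subsingleton_singleton, Or.inr h]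

namespace SimpleGraph

variable {V : Type*} (G : SimpleGraph V)

/-- Gallai's forcing relation `Γ` on ordered pairs, closed under reversal of pairs. -/
def Forces (p q : V × V) : Prop :=
  q = p.swap ∨ (q.1 = p.1 ∧ G.Adj q.1 q.2 ∧ ¬ G.Adj p.2 q.2)

def forcingClass (e : V × V) : Set (V × V) := {p | Relation.ReflTransGen G.Forces e p}

def forcingSpan (e : V × V) : Set V := {x | ∃ y, (x, y) ∈ G.forcingClass e}

def coComponent (A : Set V) (c : V) : Set V :=
  {x | Relation.ReflTransGen (fun u w => w ∈ A ∧ ¬ G.Adj u w) c x}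

structure IsForcingInvariant (Φ : V → V → Prop) : Prop where
  symm ⦃x y : V⦄ : G.Adj x y → (Φ x y ↔ Φ y x)
  forces ⦃a b d : V⦄ : G.Adj a b → G.Adj a d → ¬ G.Adj b d → (Φ a b ↔ Φ a d)

variable {G} {e p : V × V} {v : V}

lemma self_mem_forcingClass (e : V × V) : e ∈ G.forcingClass e := Relation.ReflTransGen.refl

lemma swap_mem_forcingClass (hp : p ∈ G.forcingClass e) : p.swap ∈ G.forcingClass e :=
  hp.tail (Or.inl rfl)

lemma snd_mem_forcingSpan (hp : p ∈ G.forcingClass e) : p.2 ∈ G.forcingSpan e :=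
  ⟨p.1, swap_mem_forcingClass hp⟩

lemma adj_of_mem_forcingClass (he : G.Adj e.1 e.2) (hp : p ∈ G.forcingClass e) :
    G.Adj p.1 p.2 := by
  induction hp with
  | refl => exact he
  | tail _ hpq ih =>
    rcases hpq with rfl | ⟨-, hq, -⟩
    exacts [ih.symm, hq]

lemma mem_forcingSpan_of_adj_of_not_adj (hp : p ∈ G.forcingClass e) (h₁ : G.Adj v p.1)
    (h₂ : ¬ G.Adj v p.2) : v ∈ G.forcingSpan e :=
  snd_mem_forcingSpan <|
    hp.tail (show G.Forces p (p.1, v) from Or.inr ⟨rfl, h₁.symm, fun h => h₂ h.symm⟩)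

lemma adj_iff_adj_of_notMem_forcingSpan (hv : v ∉ G.forcingSpan e)
    (hp : p ∈ G.forcingClass e) : G.Adj v p.1 ↔ G.Adj v p.2 :=
  ⟨fun h => by_contra fun h' => hv (mem_forcingSpan_of_adj_of_not_adj hp h h'),
    fun h => by_contra fun h' => hv (mem_forcingSpan_of_adj_of_not_adj
      (swap_mem_forcingClass hp) h h')⟩

lemma autonomous_forcingSpan (e : V × V) : Autonomous G (G.forcingSpan e) := by
  intro v hv
  have key : ∀ p ∈ G.forcingClass e, G.Adj v p.1 ↔ G.Adj v e.1 := by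
    intro p hp
    induction hp with
    | refl => rfl
    | tail hp hpq ih =>
      rcases hpq with rfl | ⟨h₁, -, -⟩
      · exact (adj_iff_adj_of_notMem_forcingSpan hv hp).symm.trans ih
      · rw [h₁]; exact ih
  by_cases hve : G.Adj v e.1
  · exact Or.inl fun a ⟨_, hab⟩ => (key _ hab).2 hve
  · exact Or.inr fun a ⟨_, hab⟩ h => hve ((key _ hab).1 h)

lemma _root_.PrimeGraph.forcingSpan_eq_univ (hG : PrimeGraph G) (he : G.Adj e.1 e.2) :
    G.forcingSpan e = univ := by
  have h₁ : e.1 ∈ G.forcingSpan e := ⟨e.2, self_mem_forcingClass e⟩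
  have h₂ : e.2 ∈ G.forcingSpan e := snd_mem_forcingSpan (self_mem_forcingClass e)
  rcases hG.2 _ (autonomous_forcingSpan e) with h | ⟨x, h⟩ | h
  · simp [h] at h₁
  · rw [h] at h₁ h₂
    exact absurd (h₁.trans h₂.symm) he.ne
  · exact h

namespace IsForcingInvariant

variable {Φ : V → V → Prop}

lemma not (hΦ : G.IsForcingInvariant Φ) : G.IsForcingInvariant fun x y => ¬ Φ x y :=
  ⟨fun _ _ h => not_congr (hΦ.symm h),
    fun _ _ _ hab had hbd => not_congr (hΦ.forces hab had hbd)⟩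

lemma iff_of_mem_forcingClass (hΦ : G.IsForcingInvariant Φ) (he : G.Adj e.1 e.2)
    (hp : p ∈ G.forcingClass e) : Φ p.1 p.2 ↔ Φ e.1 e.2 := by
  induction hp with
  | refl => rfl
  | tail hp hpq ih =>
    have hadj := adj_of_mem_forcingClass he hp
    rcases hpq with rfl | ⟨h₁, hq, hnadj⟩
    · exact (hΦ.symm hadj).symm.trans ih
    · rw [h₁] at hq ⊢
      exact (hΦ.forces hadj hq hnadj).symm.trans ih

lemma notMem_forcingSpan (hΦ : G.IsForcingInvariant Φ) {c : V} (he : G.Adj e.1 e.2)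
    (hne : ¬ Φ e.1 e.2) (hc₁ : G.Adj c e.1) (hc₂ : G.Adj c e.2) (hΦ₁ : Φ c e.1)
    (hΦ₂ : Φ c e.2) : c ∉ G.forcingSpan e := by
  suffices ∀ p ∈ G.forcingClass e, G.Adj c p.1 ∧ G.Adj c p.2 ∧ Φ c p.1 ∧ Φ c p.2 by
    rintro ⟨w, hw⟩
    exact (this _ hw).1.ne rfl
  intro p hp
  induction hp with
  | refl => exact ⟨hc₁, hc₂, hΦ₁, hΦ₂⟩
  | @tail p q hp hpq ih =>
    obtain ⟨hcp₁, hcp₂, hΦp₁, hΦp₂⟩ := ih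
    rcases hpq with rfl | ⟨h₁, hq, hnadj⟩
    · exact ⟨hcp₂, hcp₁, hΦp₂, hΦp₁⟩
    have hnq : ¬ Φ q.1 q.2 := fun h =>
      hne ((hΦ.iff_of_mem_forcingClass he (hp.tail (Or.inr ⟨h₁, hq, hnadj⟩))).1 h)
    rw [h₁] at hq hnq ⊢
    have hcq : G.Adj c q.2 := by_contra fun h =>
      hnq ((hΦ.forces hq hcp₁.symm fun h' => h h'.symm).2 ((hΦ.symm hcp₁).1 hΦp₁))
    exact ⟨hcp₁, hcq, hΦp₁, (hΦ.forces hcp₂ hcq hnadj).1 hΦp₂⟩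

lemma imp_of_adj (hΦ : G.IsForcingInvariant Φ) (hG : PrimeGraph G) {a c x y : V}
    (hac : G.Adj a c) (hΦac : Φ a c) (hxy : G.Adj x y) : Φ x y := by
  by_contra hne
  obtain ⟨b, hab⟩ : a ∈ G.forcingSpan (x, y) :=
    hG.forcingSpan_eq_univ (e := (x, y)) hxy ▸ mem_univ a
  have hadj : G.Adj a b := adj_of_mem_forcingClass hxy hab
  have hnab : ¬ Φ a b := fun h => hne ((hΦ.iff_of_mem_forcingClass hxy hab).1 h)
  have hbc : G.Adj b c := by_contra fun h => hnab ((hΦ.forces hadj hac h).2 hΦac)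
  -- In the triangle `abc`, `Φ` is false on `ab` and true on `ac`; whatever its value on `bc`,
  -- the opposite vertex lies outside the forcing span of one of the other two edges.
  by_cases hΦbc : Φ b c
  · exact hΦ.notMem_forcingSpan (e := (a, b)) hadj hnab hac.symm hbc.symm
      ((hΦ.symm hac).1 hΦac) ((hΦ.symm hbc).1 hΦbc)
      (hG.forcingSpan_eq_univ (e := (a, b)) hadj ▸ mem_univ c)
  · exact hΦ.not.notMem_forcingSpan (e := (a, c)) hac (not_not.2 hΦac) hadj.symm hbc
      (fun h => hnab ((hΦ.symm hadj).2 h)) hΦbc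
      (hG.forcingSpan_eq_univ (e := (a, c)) hac ▸ mem_univ b)

lemma iff_of_adj_of_adj (hΦ : G.IsForcingInvariant Φ) (hG : PrimeGraph G) {x y u w : V}
    (hxy : G.Adj x y) (huw : G.Adj u w) : Φ x y ↔ Φ u w :=
  ⟨fun h => hΦ.imp_of_adj hG hxy h huw, fun h => hΦ.imp_of_adj hG huw h hxy⟩

end IsForcingInvariant

variable {A : Set V} {c : V}

lemma coComponent_subset (hc : c ∈ A) : G.coComponent A c ⊆ A := by
  intro x hx
  induction hx with
  | refl => exact hc
  | tail _ hstep _ => exact hstep.1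

lemma autonomous_coComponent (hA : Autonomous G A) (hc : c ∈ A) :
    Autonomous G (G.coComponent A c) := by
  intro v hv
  by_cases hvA : v ∈ A
  · exact Or.inl fun a ha => by_contra fun h => hv (ha.tail ⟨hvA, fun h' => h h'.symm⟩)
  · rcases hA v hvA with h | h
    exacts [Or.inl fun a ha => h a (coComponent_subset hc ha),
      Or.inr fun a ha => h a (coComponent_subset hc ha)]

end SimpleGraph

section CompGraph

variable {α : Type*} {P : PartialOrder α} {a b d x y : α}

lemma compGraph_adj : (compGraph P).Adj x y ↔ x ≠ y ∧ (x ≤ y ∨ y ≤ x) :=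
  SimpleGraph.fromRel_adj _ _ _

lemma compGraph_adj_iff_lt : (compGraph P).Adj x y ↔ x < y ∨ y < x := by
  rw [compGraph_adj]
  constructor
  · rintro ⟨hne, h | h⟩
    exacts [Or.inl (h.lt_of_ne hne), Or.inr (h.lt_of_ne hne.symm)]
  · rintro (h | h)
    exacts [⟨h.ne, Or.inl h.le⟩, ⟨h.ne', Or.inr h.le⟩]

lemma not_le_of_not_compGraph_adj (h : ¬ (compGraph P).Adj x y) (hne : x ≠ y) : ¬ x ≤ y :=
  fun hle => h (compGraph_adj.2 ⟨hne, Or.inl hle⟩)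

lemma le_iff_not_le_of_compGraph_adj (h : (compGraph P).Adj x y) : x ≤ y ↔ ¬ y ≤ x :=
  ⟨fun hxy hyx => h.ne (le_antisymm hxy hyx), (compGraph_adj.1 h).2.resolve_right⟩

lemma le_iff_le_of_not_compGraph_adj (hab : (compGraph P).Adj a b) (had : (compGraph P).Adj a d)
    (hbd : ¬ (compGraph P).Adj b d) : a ≤ b ↔ a ≤ d := by
  rcases eq_or_ne b d with rfl | hne
  · rfl
  have hdb : ¬ (compGraph P).Adj d b := fun h => hbd h.symm
  constructor
  · intro h
    exact (compGraph_adj.1 had).2.resolve_right fun h' =>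
      not_le_of_not_compGraph_adj hdb hne.symm (h'.trans h)
  · intro h
    exact (compGraph_adj.1 hab).2.resolve_right fun h' =>
      not_le_of_not_compGraph_adj hbd hne (h'.trans h)

lemma lt_iff_lt_of_not_compGraph_adj (hab : (compGraph P).Adj a b)
    (had : (compGraph P).Adj a d) (hbd : ¬ (compGraph P).Adj b d) : a < b ↔ a < d := by
  rw [← hab.ne.le_iff_lt, ← had.ne.le_iff_lt]
  exact le_iff_le_of_not_compGraph_adj hab had hbd

lemma compGraph_inducedPoset (W : Set α) :
    compGraph (inducedPoset P W) = (compGraph P).induce W := by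
  ext x y
  simp only [compGraph_adj, SimpleGraph.comap_adj, Function.Embedding.coe_subtype, ne_eq,
    Subtype.ext_iff]
  rfl

lemma PosetAutonomous.autonomous {A : Set α} (hA : PosetAutonomous P A) :
    Autonomous (compGraph P) A := by
  intro v hv
  by_cases h : ∃ a ∈ A, (compGraph P).Adj v a
  · obtain ⟨a, ha, hva⟩ := h
    refine Or.inl fun a' ha' => compGraph_adj_iff_lt.2 ?_
    rcases compGraph_adj_iff_lt.1 hva with h | h
    exacts [Or.inl ((hA v hv a ha a' ha').1 h), Or.inr ((hA v hv a ha a' ha').2 h)]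
  · exact Or.inr fun a ha hva => h ⟨a, ha, hva⟩

lemma posetAutonomous_coComponent {A : Set α} {c : α}
    (hC : Autonomous (compGraph P) ((compGraph P).coComponent A c)) :
    PosetAutonomous P ((compGraph P).coComponent A c) := by
  intro v hv x hx x' hx'
  rcases hC v hv with hall | hnone
  · have key : ∀ y ∈ (compGraph P).coComponent A c, v < y ↔ v < c := by
      intro y hy
      induction hy with
      | refl => rfl
      | tail hu huw ih =>
        exact (lt_iff_lt_of_not_compGraph_adj (hall _ hu) (hall _ (hu.tail huw)) huw.2).symm.trans
          ih
    refine ⟨fun h => (key x' hx').2 ((key x hx).1 h), fun h => ?_⟩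
    refine (compGraph_adj_iff_lt.1 (hall x' hx')).resolve_left fun h' => ?_
    exact h.asymm ((key x hx).2 ((key x' hx').1 h'))
  · have hinc := not_or.1 (compGraph_adj_iff_lt.not.1 (hnone x hx))
    exact ⟨fun h => absurd h hinc.1, fun h => absurd h hinc.2⟩

lemma posetAutonomous_Icc
    (hv : ∀ v ∉ Icc a b, (compGraph P).Adj v a ↔ (compGraph P).Adj v b) :
    PosetAutonomous P (Icc a b) := by
  intro v hvI x hx x' hx'
  have hab : a ≤ b := hx.1.trans hx.2
  have hva : v ≠ a := by rintro rfl; exact hvI (left_mem_Icc.2 hab)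
  have hvb : v ≠ b := by rintro rfl; exact hvI (right_mem_Icc.2 hab)
  by_cases hlo : v < a
  · exact ⟨fun _ => hlo.trans_le hx'.1, fun h => (hx.1.trans_lt (h.trans hlo)).false.elim⟩
  by_cases hhi : b < v
  · exact ⟨fun h => ((h.trans_le hx.2).trans hhi).false.elim, fun _ => hx'.2.trans_lt hhi⟩
  have hav : ¬ a ≤ v := by
    intro h
    rcases compGraph_adj_iff_lt.1 ((hv v hvI).1 (compGraph_adj.2 ⟨hva, Or.inr h⟩)) with h' | h'
    exacts [hvI ⟨h, h'.le⟩, hhi h']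
  have hvb' : ¬ v ≤ b := by
    intro h
    rcases compGraph_adj_iff_lt.1 ((hv v hvI).2 (compGraph_adj.2 ⟨hvb, Or.inl h⟩)) with h' | h'
    exacts [hlo h', hvI ⟨h'.le, h⟩]
  exact ⟨fun h => absurd (h.le.trans hx.2) hvb', fun h => absurd (hx.1.trans h.le) hav⟩

lemma PosetPrime.subsingleton_or_eq_univ (hP : PosetPrime P) {A : Set α}
    (hA : PosetAutonomous P A) : A.Subsingleton ∨ A = univ :=
  subsingleton_or_eq_univ_of_trichotomy (hP.2 A hA)

lemma PosetPrime.eq_univ_of_mem (hP : PosetPrime P) {A : Set α} (hA : PosetAutonomous P A)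
    (hx : x ∈ A) (hy : y ∈ A) (hxy : x ≠ y) : A = univ :=
  (hP.subsingleton_or_eq_univ hA).resolve_left fun h => hxy (h hx hy)

lemma PosetPrime.not_isBot (hP : PosetPrime P) (m : α) : ¬ IsBot m := by
  intro hm
  have hB : PosetAutonomous P {m}ᶜ := by
    intro v hv x _ x' hx'
    rw [notMem_compl_iff, mem_singleton_iff] at hv
    subst hv
    exact ⟨fun _ => (hm x').lt_of_ne (Ne.symm hx'), fun h => (h.not_ge (hm x)).elim⟩
  rcases hP.subsingleton_or_eq_univ hB with h | h
  · have hcard : Cardinal.mk α ≤ 2 :=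
      calc Cardinal.mk α = 1 + Cardinal.mk ({m}ᶜ : Set α) := by
            rw [← Cardinal.mk_sum_compl {m}, Cardinal.mk_singleton]
        _ ≤ 1 + 1 := by gcongr; exact Cardinal.mk_le_one_iff_set_subsingleton.2 h
        _ = 2 := one_add_one_eq_two
    exact (hP.1.trans_le hcard).not_ge (by norm_num)
  · exact (h ▸ mem_univ m : m ∈ ({m}ᶜ : Set α)) rfl

lemma PosetPrime.subsingleton_or_eq_univ_of_autonomous (hP : PosetPrime P) {A : Set α}
    (hA : Autonomous (compGraph P) A) : A.Subsingleton ∨ A = univ := by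
  refine or_iff_not_imp_left.2 fun hns => ?_
  obtain ⟨x, hx, y, hy, hxy⟩ := not_subsingleton_iff.1 hns
  by_cases hinc : ∃ c ∈ A, ∃ d ∈ A, c ≠ d ∧ ¬ (compGraph P).Adj c d
  · obtain ⟨c, hc, d, hd, hcd, hncd⟩ := hinc
    have hC := posetAutonomous_coComponent (SimpleGraph.autonomous_coComponent hA hc)
    have hdC : d ∈ (compGraph P).coComponent A c := Relation.ReflTransGen.single ⟨hd, hncd⟩
    exact eq_univ_of_univ_subset <| hP.eq_univ_of_mem hC Relation.ReflTransGen.refl hdC hcd ▸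
      SimpleGraph.coComponent_subset hc
  · have hchain : ∀ c ∈ A, ∀ d ∈ A, c ≠ d → (compGraph P).Adj c d :=
      fun c hc d hd hcd => by_contra fun h => hinc ⟨c, hc, d, hd, hcd, h⟩
    obtain ⟨a, ha, b, hb, hab⟩ : ∃ a ∈ A, ∃ b ∈ A, a < b := by
      rcases compGraph_adj_iff_lt.1 (hchain x hx y hy hxy) with h | h
      exacts [⟨x, hx, y, hy, h⟩, ⟨y, hy, x, hx, h⟩]
    have hI : PosetAutonomous P (Icc a b) := by
      refine posetAutonomous_Icc fun v hv => ?_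
      by_cases hvA : v ∈ A
      · have hva : v ≠ a := by rintro rfl; exact hv (left_mem_Icc.2 hab.le)
        have hvb : v ≠ b := by rintro rfl; exact hv (right_mem_Icc.2 hab.le)
        exact iff_of_true (hchain v hvA a ha hva) (hchain v hvA b hb hvb)
      · rcases hA v hvA with h | h
        exacts [iff_of_true (h a ha) (h b hb), iff_of_false (h a ha) (h b hb)]
    have hIu := hP.eq_univ_of_mem hI (left_mem_Icc.2 hab.le) (right_mem_Icc.2 hab.le) hab.ne
    exact (hP.not_isBot a fun z => (hIu ▸ mem_univ z : z ∈ Icc a b).1).elim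

lemma posetPrime_iff_primeGraph : PosetPrime P ↔ PrimeGraph (compGraph P) := by
  refine ⟨fun hP => ⟨hP.1, fun A hA => ?_⟩,
    fun hG => ⟨hG.1, fun A hA => hG.2 A hA.autonomous⟩⟩
  rcases hP.subsingleton_or_eq_univ_of_autonomous hA with h | h
  · exact h.eq_empty_or_singleton.elim Or.inl (Or.inr ∘ Or.inl)
  · exact Or.inr (Or.inr h)

end CompGraph

section Embedding

variable {α β : Type*} {P : PartialOrder α} {Q : PartialOrder β}

lemma PosetEmbeds.nonempty_compGraph_embedding (h : PosetEmbeds P Q) :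
    Nonempty (compGraph P ↪g compGraph Q) := by
  obtain ⟨f, hf⟩ := h
  let e : α ↪o β := OrderEmbedding.ofMapLEIff f fun x y => (hf x y).symm
  exact ⟨⟨e.toEmbedding, by simp [compGraph_adj, e.injective.ne_iff]⟩⟩

lemma isForcingInvariant_compGraph_le_iff (f : compGraph P ↪g compGraph Q) :
    (compGraph P).IsForcingInvariant fun x y => f x ≤ f y ↔ x ≤ y where
  symm x y h := by
    rw [le_iff_not_le_of_compGraph_adj h, le_iff_not_le_of_compGraph_adj (f.map_adj_iff.2 h),
      not_iff_not]
  forces a b d hab had hbd := by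
    rw [le_iff_le_of_not_compGraph_adj hab had hbd, le_iff_le_of_not_compGraph_adj
      (f.map_adj_iff.2 hab) (f.map_adj_iff.2 had) (mt f.map_adj_iff.1 hbd)]

lemma PrimeGraph.compGraph_embedding_le_iff (hG : PrimeGraph (compGraph P))
    (f : compGraph P ↪g compGraph Q) :
    (∀ x y, f x ≤ f y ↔ x ≤ y) ∨ ∀ x y, f x ≤ f y ↔ y ≤ x := by
  have hΦ := isForcingInvariant_compGraph_le_iff f
  have hnon : ∀ x y, x ≠ y → ¬ (compGraph P).Adj x y →
      ¬ f x ≤ f y ∧ ¬ x ≤ y ∧ ¬ y ≤ x :=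
    fun x y hne h => ⟨not_le_of_not_compGraph_adj (mt f.map_adj_iff.1 h) (f.injective.ne hne),
      not_le_of_not_compGraph_adj h hne, not_le_of_not_compGraph_adj (mt .symm h) hne.symm⟩
  by_cases hpres : ∀ x y, (compGraph P).Adj x y → (f x ≤ f y ↔ x ≤ y)
  · refine Or.inl fun x y => ?_
    rcases eq_or_ne x y with rfl | hne
    · exact iff_of_true le_rfl le_rfl
    by_cases h : (compGraph P).Adj x y
    · exact hpres x y h
    · exact iff_of_false (hnon x y hne h).1 (hnon x y hne h).2.1
  · simp only [not_forall] at hpres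
    obtain ⟨x₀, y₀, h₀, hn₀⟩ := hpres
    refine Or.inr fun x y => ?_
    rcases eq_or_ne x y with rfl | hne
    · exact iff_of_true le_rfl le_rfl
    by_cases h : (compGraph P).Adj x y
    · have hn := mt (hΦ.iff_of_adj_of_adj hG h h₀).1 hn₀
      rw [le_iff_not_le_of_compGraph_adj h] at hn
      tauto
    · exact iff_of_false (hnon x y hne h).1 (hnon x y hne h).2.2

lemma PrimeGraph.posetEmbeds_inducedPoset {W : Set α}
    (hG : PrimeGraph (compGraph P)) (f : compGraph P ↪g compGraph (inducedPoset P W)) :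
    PosetEmbeds P (inducedPoset P W) := by
  rcases hG.compGraph_embedding_le_iff (Q := inducedPoset P W) f with h | h
  · exact ⟨f, fun x y => (h x y).symm⟩
  · exact ⟨fun x => f (f x), fun x y => (h y x).symm.trans (h (f x) (f y)).symm⟩

end Embedding

/-- A poset is minimal prime if and only if its comparability graph is
a minimal prime graph. -/
theorem poset_minimal_prime_iff {α : Type*} (P : PartialOrder α) :
    PosetMinimalPrime P ↔ MinimalPrimeGraph (compGraph P) := by
  rw [PosetMinimalPrime, MinimalPrimeGraph, posetPrime_iff_primeGraph]
  refine and_congr_right fun hG => forall_congr' fun W => forall_congr' fun _ => ?_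
  rw [posetPrime_iff_primeGraph (P := inducedPoset P W), ← compGraph_inducedPoset]
  exact imp_congr_right fun _ =>
    ⟨PosetEmbeds.nonempty_compGraph_embedding, fun ⟨f⟩ => hG.posetEmbeds_inducedPoset f⟩
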